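/- Under the bilinear mixed-effects error model, for pairwise distinct indices i, j, k, l the errors ξ_{ij} have mean zero and covariances: Var(ξ_{ij}) = σ_a² + σ_b² + d·σ_z⁴ + σ_γ² + σ_ε²; Cov(ξ_{ij}, ξ_{ji}) = 2ρσ_aσ_b + d·σ_z⁴ + σ_γ²; Cov(ξ_{ij}, ξ_{il}) = σ_a²; Cov(ξ_{ij}, ξ_{kj}) = σ_b²; Cov(ξ_{ij}, ξ_{ki}) = ρσ_aσ_b; and Cov(ξ_{ij}, ξ_{kl}) = 0. -/

import Mathlib

/-!
The error `ξ_{pq}` is the sum of the four components `a_p + b_q`, `z_p ⬝ᵥ z_q`, `γ_{pq}` and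
`ε_{pq}`, which are measurable with respect to four independent σ-algebras; hence every covariance
of errors splits into the sum of the covariances of corresponding components. Within each family,
independence kills every covariance except between equal indices (equal up to order for the
symmetric terms). For the latent term, `E[(z_p ⬝ᵥ z_q)(z_r ⬝ᵥ z_s)]` vanishes as soon as some index
occurs only once, because that vector is centred and independent of the other ones, while
`E[(z_p ⬝ᵥ z_q)²] = ∑_{m,m'} E[z_{pm} z_{pm'}] E[z_{qm} z_{qm'}] = d σ_z⁴`.
-/

open MeasureTheory ProbabilityTheory Filter
open scoped BigOperators Topology ENNReal NNReal

noncomputable def cov {Ω : Type} [MeasureSpace Ω] (X Y : Ω → ℝ) : ℝ :=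
  ∫ ω, (X ω - ∫ ω', X ω') * (Y ω - ∫ ω', Y ω')

open Matrix

namespace ProbabilityTheory

variable {Ω : Type*} {mΩ : MeasurableSpace Ω} {μ : Measure Ω}

lemma covariance_eq_integral_mul {X Y : Ω → ℝ} (hX : ∫ ω, X ω ∂μ = 0) (hY : ∫ ω, Y ω ∂μ = 0) :
    cov[X, Y; μ] = ∫ ω, X ω * Y ω ∂μ := by
  simp [covariance, hX, hY]

lemma IndepFun.memLp_two_mul {X Y : Ω → ℝ} (hXY : IndepFun X Y μ) (hX : MemLp X 2 μ)
    (hY : MemLp Y 2 μ) : MemLp (X * Y) 2 μ := by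
  rw [memLp_two_iff_integrable_sq (hX.1.mul hY.1)]
  simp only [Pi.mul_apply, mul_pow]
  exact (hXY.comp (measurable_id.pow_const 2) (measurable_id.pow_const 2)).integrable_mul
    hX.integrable_sq hY.integrable_sq

lemma iIndep.indepFun {ι β γ : Type*} [MeasurableSpace β] [MeasurableSpace γ]
    {m : ι → MeasurableSpace Ω} (h : iIndep m μ) {i j : ι} (hij : i ≠ j) {X : Ω → β} {Y : Ω → γ}
    (hX : Measurable[m i] X) (hY : Measurable[m j] Y) : IndepFun X Y μ := by
  rw [IndepFun_iff_Indep]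
  exact indep_of_indep_of_le_left (indep_of_indep_of_le_right (h.indep hij) hY.comap_le)
    hX.comap_le

lemma iIndep.covariance_sum_sum {ι : Type*} [Fintype ι] [IsFiniteMeasure μ]
    {m : ι → MeasurableSpace Ω} (h : iIndep m μ) {X Y : ι → Ω → ℝ}
    (hXm : ∀ u, Measurable[m u] (X u)) (hYm : ∀ u, Measurable[m u] (Y u))
    (hX : ∀ u, MemLp (X u) 2 μ) (hY : ∀ u, MemLp (Y u) 2 μ) :
    cov[∑ u, X u, ∑ u, Y u; μ] = ∑ u, cov[X u, Y u; μ] := by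
  rw [ProbabilityTheory.covariance_sum_sum hX hY]
  refine Finset.sum_congr rfl fun u _ => Finset.sum_eq_single u (fun v _ hvu => ?_) (by simp)
  exact (h.indepFun hvu.symm (hXm u) (hYm v)).covariance_eq_zero (hX u) (hY v)

variable {κ : Type*} [Fintype κ]

lemma IndepFun.memLp_two_dotProduct {X Y : Ω → κ → ℝ} (hXY : IndepFun X Y μ)
    (hX : ∀ m, MemLp (fun ω => X ω m) 2 μ) (hY : ∀ m, MemLp (fun ω => Y ω m) 2 μ) :
    MemLp (fun ω => X ω ⬝ᵥ Y ω) 2 μ :=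
  memLp_finsetSum _ fun m _ =>
    (hXY.comp (measurable_pi_apply m) (measurable_pi_apply m)).memLp_two_mul (hX m) (hY m)

lemma IndepFun.integral_dotProduct {X Y : Ω → κ → ℝ} (hXY : IndepFun X Y μ)
    (hX : ∀ m, Integrable (fun ω => X ω m) μ) (hY : ∀ m, Integrable (fun ω => Y ω m) μ) :
    ∫ ω, X ω ⬝ᵥ Y ω ∂μ = (fun m => ∫ ω, X ω m ∂μ) ⬝ᵥ fun m => ∫ ω, Y ω m ∂μ := by
  have hXYm : ∀ m, IndepFun (fun ω => X ω m) (fun ω => Y ω m) μ := fun m =>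
    hXY.comp (measurable_pi_apply m) (measurable_pi_apply m)
  have hint : ∀ m, Integrable (fun ω => X ω m * Y ω m) μ := fun m =>
    (hXYm m).integrable_mul (hX m) (hY m)
  simp only [dotProduct]
  rw [integral_finsetSum _ fun m _ => hint m]
  exact Finset.sum_congr rfl fun m _ =>
    (hXYm m).integral_mul_eq_mul_integral (hX m).1 (hY m).1

lemma IndepFun.integral_dotProduct_sq {X Y : Ω → κ → ℝ} (hXY : IndepFun X Y μ)
    (hX : ∀ m, MemLp (fun ω => X ω m) 2 μ) (hY : ∀ m, MemLp (fun ω => Y ω m) 2 μ) :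
    ∫ ω, (X ω ⬝ᵥ Y ω) ^ 2 ∂μ =
      ∑ m, ∑ m', (∫ ω, X ω m * X ω m' ∂μ) * ∫ ω, Y ω m * Y ω m' ∂μ := by
  let sq (v : κ → ℝ) (mm : κ × κ) : ℝ := v mm.1 * v mm.2
  have hsq : Measurable sq := measurable_pi_lambda _ fun mm =>
    (measurable_pi_apply mm.1).mul (measurable_pi_apply mm.2)
  have hexp : ∀ ω, (X ω ⬝ᵥ Y ω) ^ 2 = sq (X ω) ⬝ᵥ sq (Y ω) := fun ω => by
    simp only [sq, dotProduct, pow_two, Finset.sum_mul_sum, ← Finset.univ_product_univ,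
      Finset.sum_product]
    exact Finset.sum_congr rfl fun m _ => Finset.sum_congr rfl fun m' _ => by ring
  have hind : IndepFun (fun ω => sq (X ω)) (fun ω => sq (Y ω)) μ := hXY.comp hsq hsq
  simp_rw [hexp]
  rw [hind.integral_dotProduct (fun mm => (hX mm.1).integrable_mul (hX mm.2))
    (fun mm => (hY mm.1).integrable_mul (hY mm.2)), dotProduct, ← Finset.univ_product_univ,
    Finset.sum_product]

lemma iIndepFun.covariance_comp_comp_eq_ite {ι β : Type*} [DecidableEq ι] [MeasurableSpace β]
    {Y : ι → Ω → β} (h : iIndepFun Y μ) {f g : β → ℝ} (hf : Measurable f) (hg : Measurable g)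
    (hfY : ∀ i, MemLp (fun ω => f (Y i ω)) 2 μ) (hgY : ∀ i, MemLp (fun ω => g (Y i ω)) 2 μ)
    {c : ℝ} (hc : ∀ i, cov[fun ω => f (Y i ω), fun ω => g (Y i ω); μ] = c) (i j : ι) :
    cov[fun ω => f (Y i ω), fun ω => g (Y j ω); μ] = if i = j then c else 0 := by
  split_ifs with hij
  · subst hij; exact hc i
  · exact ((h.indepFun hij).comp hf hg).covariance_eq_zero (hfY i) (hgY j)

lemma iIndepFun.integral_mul_eq_ite {ι : Type*} [DecidableEq ι] {X : ι → Ω → ℝ}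
    (h : iIndepFun X μ) (hX : ∀ i, AEStronglyMeasurable (X i) μ) (h0 : ∀ i, ∫ ω, X i ω ∂μ = 0)
    {σ : ℝ} (hvar : ∀ i, cov[X i, X i; μ] = σ ^ 2) (i j : ι) :
    ∫ ω, X i ω * X j ω ∂μ = if i = j then σ ^ 2 else 0 := by
  split_ifs with hij
  · subst hij; rw [← hvar i, covariance_eq_integral_mul (h0 i) (h0 i)]
  · rw [← mul_zero (∫ ω, X i ω ∂μ), ← h0 j]
    exact (h.indepFun hij).integral_mul_eq_mul_integral (hX i) (hX j)

end ProbabilityTheory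

namespace BilinearMixedEffects

lemma cov_eq_covariance {Ω : Type} [MeasureSpace Ω] (X Y : Ω → ℝ) : cov X Y = cov[X, Y] := rfl

variable {Ω : Type*} {mΩ : MeasurableSpace Ω} {μ : Measure Ω} {ι κ : Type*} [Fintype κ]

section LatentPositions

variable {z : ι → Ω → κ → ℝ}

lemma integral_dotProduct_eq_zero (hz_indep : iIndepFun z μ)
    (hz_int : ∀ i m, Integrable (fun ω => z i ω m) μ) (hz_mean : ∀ i m, ∫ ω, z i ω m ∂μ = 0)
    {p q : ι} (hpq : p ≠ q) : ∫ ω, z p ω ⬝ᵥ z q ω ∂μ = 0 := by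
  rw [(hz_indep.indepFun hpq).integral_dotProduct (hz_int p) (hz_int q)]
  simp [hz_mean]

lemma integral_dotProduct_sq_eq_card_mul [DecidableEq κ] (hz_indep : iIndepFun z μ)
    (hz_L2 : ∀ i m, MemLp (fun ω => z i ω m) 2 μ) (hz_mean : ∀ i m, ∫ ω, z i ω m ∂μ = 0)
    {σ : ℝ} (hz_var : ∀ i m, cov[fun ω => z i ω m, fun ω => z i ω m; μ] = σ ^ 2)
    (hz_comp_indep : ∀ i, iIndepFun (fun m ω => z i ω m) μ) {p q : ι} (hpq : p ≠ q) :
    ∫ ω, (z p ω ⬝ᵥ z q ω) ^ 2 ∂μ = Fintype.card κ * σ ^ 4 := by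
  have hmom : ∀ i m m', ∫ ω, z i ω m * z i ω m' ∂μ = if m = m' then σ ^ 2 else 0 :=
    fun i => (hz_comp_indep i).integral_mul_eq_ite (fun m => (hz_L2 i m).1) (hz_mean i) (hz_var i)
  rw [(hz_indep.indepFun hpq).integral_dotProduct_sq (hz_L2 p) (hz_L2 q)]
  simp only [hmom, ite_mul, zero_mul, Finset.sum_ite_eq, Finset.mem_univ, if_true,
    Finset.sum_const, Finset.card_univ, nsmul_eq_mul]
  ring

lemma integral_dotProduct_mul_dotProduct_eq_zero [IsFiniteMeasure μ] (hz_indep : iIndepFun z μ)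
    (hz_meas : ∀ i, Measurable (z i)) (hz_L2 : ∀ i m, MemLp (fun ω => z i ω m) 2 μ)
    (hz_mean : ∀ i m, ∫ ω, z i ω m ∂μ = 0) {p q r s : ι}
    (hqp : q ≠ p) (hqr : q ≠ r) (hqs : q ≠ s) (hrs : r ≠ s) :
    ∫ ω, (z p ω ⬝ᵥ z q ω) * (z r ω ⬝ᵥ z s ω) ∂μ = 0 := by
  classical
  set V : Ω → κ → ℝ := fun ω => (z r ω ⬝ᵥ z s ω) • z p ω
  have hind : IndepFun (z q) V μ := by
    let S : Finset ι := {q}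
    let T : Finset ι := {p, r, s}
    have hφ : Measurable fun u : S → κ → ℝ => u ⟨q, by simp [S]⟩ := measurable_pi_apply _
    have hψ : Measurable fun u : T → κ → ℝ =>
        (u ⟨r, by simp [T]⟩ ⬝ᵥ u ⟨s, by simp [T]⟩) • u ⟨p, by simp [T]⟩ :=
      Continuous.measurable (by fun_prop)
    exact (hz_indep.indepFun_finset S T (by simp [S, T, hqp, hqr, hqs]) hz_meas).comp hφ hψ
  have hV : ∀ m, Integrable (fun ω => V ω m) μ := fun m =>
    ((hz_indep.indepFun hrs).memLp_two_dotProduct (hz_L2 r) (hz_L2 s)).integrable_mul (hz_L2 p m)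
  calc ∫ ω, (z p ω ⬝ᵥ z q ω) * (z r ω ⬝ᵥ z s ω) ∂μ = ∫ ω, z q ω ⬝ᵥ V ω ∂μ := by
        congr 1 with ω
        simp only [V, dotProduct_smul, smul_eq_mul, dotProduct_comm (z q ω) (z p ω)]
        ring
    _ = 0 := by
        rw [hind.integral_dotProduct (fun m => (hz_L2 q m).integrable one_le_two) hV]
        simp [hz_mean]

lemma covariance_dotProduct_dotProduct [IsFiniteMeasure μ] [DecidableEq ι] [DecidableEq κ]
    (hz_indep : iIndepFun z μ) (hz_meas : ∀ i, Measurable (z i))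
    (hz_L2 : ∀ i m, MemLp (fun ω => z i ω m) 2 μ) (hz_mean : ∀ i m, ∫ ω, z i ω m ∂μ = 0)
    {σ : ℝ} (hz_var : ∀ i m, cov[fun ω => z i ω m, fun ω => z i ω m; μ] = σ ^ 2)
    (hz_comp_indep : ∀ i, iIndepFun (fun m ω => z i ω m) μ) {p q r s : ι}
    (hpq : p ≠ q) (hrs : r ≠ s) :
    cov[fun ω => z p ω ⬝ᵥ z q ω, fun ω => z r ω ⬝ᵥ z s ω; μ] =
      if s(p, q) = s(r, s) then Fintype.card κ * σ ^ 4 else 0 := by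
  have hint : ∀ i m, Integrable (fun ω => z i ω m) μ := fun i m =>
    (hz_L2 i m).integrable one_le_two
  rw [covariance_eq_integral_mul (integral_dotProduct_eq_zero hz_indep hint hz_mean hpq)
    (integral_dotProduct_eq_zero hz_indep hint hz_mean hrs)]
  split_ifs with h
  · obtain ⟨rfl, rfl⟩ | ⟨rfl, rfl⟩ := Sym2.eq_iff.1 h <;>
      simp only [dotProduct_comm (z q _) (z p _), ← pow_two] <;>
      exact integral_dotProduct_sq_eq_card_mul hz_indep hz_L2 hz_mean hz_var hz_comp_indep hpq
  · rw [Sym2.eq_iff] at h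
    by_cases hq : q = r ∨ q = s
    · simp only [dotProduct_comm (z p _)]
      exact integral_dotProduct_mul_dotProduct_eq_zero hz_indep hz_meas hz_L2 hz_mean hpq
        (by grind) (by grind) hrs
    · obtain ⟨hqr, hqs⟩ := not_or.1 hq
      exact integral_dotProduct_mul_dotProduct_eq_zero hz_indep hz_meas hz_L2 hz_mean hpq.symm
        hqr hqs hrs

end LatentPositions

section PairEffects

lemma covariance_symmetric_eq_ite [LinearOrder ι] {γ : ι → ι → Ω → ℝ}
    (hγ_symm : ∀ i j, γ i j = γ j i) (hγ_L2 : ∀ i j, MemLp (γ i j) 2 μ) {σ : ℝ}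
    (hγ_var : ∀ i j, cov[γ i j, γ i j; μ] = σ ^ 2)
    (hγ_indep : iIndepFun (fun (q : {q : ι × ι // q.1 < q.2}) ω => γ q.1.1 q.1.2 ω) μ)
    {p q r s : ι} (hpq : p ≠ q) (hrs : r ≠ s) :
    cov[γ p q, γ r s; μ] = if s(p, q) = s(r, s) then σ ^ 2 else 0 := by
  split_ifs with h
  · obtain ⟨rfl, rfl⟩ | ⟨rfl, rfl⟩ := Sym2.eq_iff.1 h
    · exact hγ_var p q
    · rw [hγ_symm]; exact hγ_var _ _
  · wlog hpq' : p < q generalizing p q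
    · rw [hγ_symm p q]
      exact this hpq.symm (by rwa [Sym2.eq_swap]) (hpq.lt_or_gt.resolve_left hpq')
    wlog hrs' : r < s generalizing r s
    · rw [hγ_symm r s]
      exact this hrs.symm (by rwa [Sym2.eq_swap (a := s)]) (hrs.lt_or_gt.resolve_left hrs')
    have hne : (⟨(p, q), hpq'⟩ : {q : ι × ι // q.1 < q.2}) ≠ ⟨(r, s), hrs'⟩ := by
      simp only [ne_eq, Subtype.mk.injEq, Prod.mk.injEq]
      rintro ⟨rfl, rfl⟩
      exact h rfl
    exact (hγ_indep.indepFun hne).covariance_eq_zero (hγ_L2 p q) (hγ_L2 r s)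

lemma covariance_offDiag_eq_ite [DecidableEq ι] {ε : ι → ι → Ω → ℝ}
    (hε_L2 : ∀ i j, MemLp (ε i j) 2 μ) {σ : ℝ} (hε_var : ∀ i j, cov[ε i j, ε i j; μ] = σ ^ 2)
    (hε_indep : iIndepFun (fun (q : {q : ι × ι // q.1 ≠ q.2}) ω => ε q.1.1 q.1.2 ω) μ)
    {p q r s : ι} (hpq : p ≠ q) (hrs : r ≠ s) :
    cov[ε p q, ε r s; μ] = if (p, q) = (r, s) then σ ^ 2 else 0 := by
  split_ifs with h
  · obtain ⟨rfl, rfl⟩ := Prod.mk.inj h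
    exact hε_var p q
  · have hne : (⟨(p, q), hpq⟩ : {q : ι × ι // q.1 ≠ q.2}) ≠ ⟨(r, s), hrs⟩ := by
      simpa [Subtype.ext_iff] using h
    exact (hε_indep.indepFun hne).covariance_eq_zero (hε_L2 p q) (hε_L2 r s)

end PairEffects

lemma covariance_add_add_eq_ite [IsFiniteMeasure μ] [DecidableEq ι] {a b : ι → Ω → ℝ}
    (ha_L2 : ∀ i, MemLp (a i) 2 μ) (hb_L2 : ∀ i, MemLp (b i) 2 μ) {σa σb ρ : ℝ}
    (ha_var : ∀ i, cov[a i, a i; μ] = σa ^ 2) (hb_var : ∀ i, cov[b i, b i; μ] = σb ^ 2)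
    (hab_cov : ∀ i, cov[a i, b i; μ] = ρ * σa * σb)
    (hab_indep : iIndepFun (fun i ω => (a i ω, b i ω)) μ) (p q r s : ι) :
    cov[a p + b q, a r + b s; μ] = (if p = r then σa ^ 2 else 0) +
      (if p = s then ρ * σa * σb else 0) + (if q = r then ρ * σa * σb else 0) +
      (if q = s then σb ^ 2 else 0) := by
  have hba_cov : ∀ i, cov[b i, a i; μ] = ρ * σa * σb := fun i => by
    rw [covariance_comm, hab_cov]
  rw [covariance_add_left (ha_L2 p) (hb_L2 q) ((ha_L2 r).add (hb_L2 s)),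
    covariance_add_right (ha_L2 p) (ha_L2 r) (hb_L2 s),
    covariance_add_right (hb_L2 q) (ha_L2 r) (hb_L2 s),
    hab_indep.covariance_comp_comp_eq_ite (f := Prod.fst) (g := Prod.fst) measurable_fst
      measurable_fst ha_L2 ha_L2 ha_var,
    hab_indep.covariance_comp_comp_eq_ite (f := Prod.fst) (g := Prod.snd) measurable_fst
      measurable_snd ha_L2 hb_L2 hab_cov,
    hab_indep.covariance_comp_comp_eq_ite (f := Prod.snd) (g := Prod.fst) measurable_snd
      measurable_fst hb_L2 ha_L2 hba_cov,
    hab_indep.covariance_comp_comp_eq_ite (f := Prod.snd) (g := Prod.snd) measurable_snd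
      measurable_snd hb_L2 hb_L2 hb_var]
  ring

def errorComponents (a b : ι → Ω → ℝ) (z : ι → Ω → κ → ℝ) (γ ε : ι → ι → Ω → ℝ) (i j : ι) :
    Fin 4 → Ω → ℝ :=
  ![a i + b j, fun ω => z i ω ⬝ᵥ z j ω, γ i j, ε i j]

abbrev componentSigmaAlgebras (a b : ι → Ω → ℝ) (z : ι → Ω → κ → ℝ) (γ ε : ι → ι → Ω → ℝ) :
    Fin 4 → MeasurableSpace Ω :=
  ![⨆ i, MeasurableSpace.comap (fun ω => (a i ω, b i ω)) inferInstance,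
    ⨆ i, MeasurableSpace.comap (z i) inferInstance,
    ⨆ i, ⨆ j, MeasurableSpace.comap (γ i j) inferInstance,
    ⨆ i, ⨆ j, MeasurableSpace.comap (ε i j) inferInstance]

variable {a b : ι → Ω → ℝ} {z : ι → Ω → κ → ℝ} {γ ε : ι → ι → Ω → ℝ}

lemma eq_sum_errorComponents {ξ : ι → ι → Ω → ℝ}
    (hξ : ∀ i j ω, ξ i j ω = a i ω + b j ω + z i ω ⬝ᵥ z j ω + γ i j ω + ε i j ω) (i j : ι) :
    ξ i j = ∑ u, errorComponents a b z γ ε i j u := by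
  ext ω
  simp [errorComponents, Fin.sum_univ_four, hξ]

lemma measurable_errorComponents (i j : ι) (u : Fin 4) :
    Measurable[componentSigmaAlgebras a b z γ ε u] (errorComponents a b z γ ε i j u) := by
  have hab : ∀ k, Measurable[⨆ i, MeasurableSpace.comap (fun ω => (a i ω, b i ω)) inferInstance]
      (fun ω => (a k ω, b k ω)) := fun k => (comap_measurable _).iSup' k
  have hz : ∀ k, Measurable[⨆ i, MeasurableSpace.comap (z i) inferInstance] (z k) :=
    fun k => (comap_measurable _).iSup' k
  fin_cases u
  · exact (measurable_fst.comp (hab i)).add (measurable_snd.comp (hab j))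
  · exact Finset.measurable_sum _ fun m _ =>
      ((measurable_pi_apply m).comp (hz i)).mul ((measurable_pi_apply m).comp (hz j))
  · exact (comap_measurable (γ i j)).mono
      (le_iSup₂ (f := fun i j => MeasurableSpace.comap (γ i j) inferInstance) i j) le_rfl
  · exact (comap_measurable (ε i j)).mono
      (le_iSup₂ (f := fun i j => MeasurableSpace.comap (ε i j) inferInstance) i j) le_rfl

lemma memLp_errorComponents (ha_L2 : ∀ i, MemLp (a i) 2 μ) (hb_L2 : ∀ i, MemLp (b i) 2 μ)
    (hz_L2 : ∀ i m, MemLp (fun ω => z i ω m) 2 μ) (hγ_L2 : ∀ i j, MemLp (γ i j) 2 μ)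
    (hε_L2 : ∀ i j, MemLp (ε i j) 2 μ) (hz_indep : iIndepFun z μ) {i j : ι} (hij : i ≠ j)
    (u : Fin 4) : MemLp (errorComponents a b z γ ε i j u) 2 μ := by
  fin_cases u
  · exact (ha_L2 i).add (hb_L2 j)
  · exact (hz_indep.indepFun hij).memLp_two_dotProduct (hz_L2 i) (hz_L2 j)
  · exact hγ_L2 i j
  · exact hε_L2 i j

variable [IsFiniteMeasure μ]

lemma integral_error_eq_zero (ha_L2 : ∀ i, MemLp (a i) 2 μ) (hb_L2 : ∀ i, MemLp (b i) 2 μ)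
    (hz_L2 : ∀ i m, MemLp (fun ω => z i ω m) 2 μ) (hγ_L2 : ∀ i j, MemLp (γ i j) 2 μ)
    (hε_L2 : ∀ i j, MemLp (ε i j) 2 μ) (hz_indep : iIndepFun z μ)
    (ha_mean : ∀ i, ∫ ω, a i ω ∂μ = 0) (hb_mean : ∀ i, ∫ ω, b i ω ∂μ = 0)
    (hz_mean : ∀ i m, ∫ ω, z i ω m ∂μ = 0) (hγ_mean : ∀ i j, ∫ ω, γ i j ω ∂μ = 0)
    (hε_mean : ∀ i j, ∫ ω, ε i j ω ∂μ = 0) {ξ : ι → ι → Ω → ℝ}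
    (hξ : ∀ i j ω, ξ i j ω = a i ω + b j ω + z i ω ⬝ᵥ z j ω + γ i j ω + ε i j ω)
    {i j : ι} (hij : i ≠ j) : ∫ ω, ξ i j ω ∂μ = 0 := by
  have hint : ∀ k m, Integrable (fun ω => z k ω m) μ := fun k m =>
    (hz_L2 k m).integrable one_le_two
  have hcomp : ∀ u, ∫ ω, errorComponents a b z γ ε i j u ω ∂μ = 0 := by
    intro u
    fin_cases u
    · simp [errorComponents, integral_add ((ha_L2 i).integrable one_le_two)
        ((hb_L2 j).integrable one_le_two), ha_mean, hb_mean]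
    · exact integral_dotProduct_eq_zero hz_indep hint hz_mean hij
    · exact hγ_mean i j
    · exact hε_mean i j
  simp only [eq_sum_errorComponents hξ, Finset.sum_apply]
  rw [integral_finsetSum _ fun u _ => (memLp_errorComponents ha_L2 hb_L2 hz_L2 hγ_L2 hε_L2
    hz_indep hij u).integrable one_le_two]
  exact Finset.sum_eq_zero fun u _ => hcomp u

lemma covariance_error_eq_sum (ha_L2 : ∀ i, MemLp (a i) 2 μ) (hb_L2 : ∀ i, MemLp (b i) 2 μ)
    (hz_L2 : ∀ i m, MemLp (fun ω => z i ω m) 2 μ) (hγ_L2 : ∀ i j, MemLp (γ i j) 2 μ)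
    (hε_L2 : ∀ i j, MemLp (ε i j) 2 μ) (hz_indep : iIndepFun z μ)
    (hfam : iIndep (componentSigmaAlgebras a b z γ ε) μ) {ξ : ι → ι → Ω → ℝ}
    (hξ : ∀ i j ω, ξ i j ω = a i ω + b j ω + z i ω ⬝ᵥ z j ω + γ i j ω + ε i j ω)
    {p q r s : ι} (hpq : p ≠ q) (hrs : r ≠ s) :
    cov[ξ p q, ξ r s; μ] = cov[a p + b q, a r + b s; μ] +
      cov[fun ω => z p ω ⬝ᵥ z q ω, fun ω => z r ω ⬝ᵥ z s ω; μ] +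
      cov[γ p q, γ r s; μ] + cov[ε p q, ε r s; μ] := by
  rw [eq_sum_errorComponents hξ, eq_sum_errorComponents hξ,
    hfam.covariance_sum_sum (measurable_errorComponents p q) (measurable_errorComponents r s)
      (memLp_errorComponents ha_L2 hb_L2 hz_L2 hγ_L2 hε_L2 hz_indep hpq)
      (memLp_errorComponents ha_L2 hb_L2 hz_L2 hγ_L2 hε_L2 hz_indep hrs), Fin.sum_univ_four]
  rfl

end BilinearMixedEffects

open BilinearMixedEffects

theorem bilinear_mixed_effects_covariances_general {Ω : Type} [MeasureSpace Ω]
    [IsProbabilityMeasure (volume : Measure Ω)]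
    (n d : ℕ) (a b : Fin n → Ω → ℝ) (z : Fin n → Ω → Fin d → ℝ)
    (γ ε : Fin n → Fin n → Ω → ℝ)
    (σa σb σz σγ σε ρ : ℝ)
    -- measurability and integrability
    (hmeas_z : ∀ i, Measurable (z i))
    (ha_L2 : ∀ i, MemLp (a i) 2 volume) (hb_L2 : ∀ i, MemLp (b i) 2 volume)
    (hz_L2 : ∀ i m, MemLp (fun ω => z i ω m) 2 volume)
    (hγ_L2 : ∀ i j, MemLp (γ i j) 2 volume) (hε_L2 : ∀ i j, MemLp (ε i j) 2 volume)
    -- additive sender/receiver effects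
    (ha_mean : ∀ i, ∫ ω, a i ω = 0) (hb_mean : ∀ i, ∫ ω, b i ω = 0)
    (ha_var : ∀ i, cov (a i) (a i) = σa ^ 2) (hb_var : ∀ i, cov (b i) (b i) = σb ^ 2)
    (hab_cov : ∀ i, cov (a i) (b i) = ρ * σa * σb)
    (hab_indep : iIndepFun (fun i ω => (a i ω, b i ω)) volume)
    -- multiplicative latent positions
    (hz_mean : ∀ i m, ∫ ω, z i ω m = 0)
    (hz_var : ∀ i m, cov (fun ω => z i ω m) (fun ω => z i ω m) = σz ^ 2)
    (hz_comp_indep : ∀ i, iIndepFun (fun m ω => z i ω m) volume)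
    (hz_indep : iIndepFun z volume)
    -- symmetric pair effects
    (hγ_symm : ∀ i j, γ i j = γ j i)
    (hγ_mean : ∀ i j, ∫ ω, γ i j ω = 0)
    (hγ_var : ∀ i j, cov (γ i j) (γ i j) = σγ ^ 2)
    (hγ_indep : iIndepFun
      (fun (q : {q : Fin n × Fin n // q.1 < q.2}) ω => γ q.1.1 q.1.2 ω) volume)
    -- idiosyncratic noise
    (hε_mean : ∀ i j, ∫ ω, ε i j ω = 0)
    (hε_var : ∀ i j, cov (ε i j) (ε i j) = σε ^ 2)
    (hε_indep : iIndepFun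
      (fun (q : {q : Fin n × Fin n // q.1 ≠ q.2}) ω => ε q.1.1 q.1.2 ω) volume)
    -- the four families are mutually independent
    (hfam : iIndep
      (![⨆ i, MeasurableSpace.comap (fun ω => (a i ω, b i ω)) inferInstance,
         ⨆ i, MeasurableSpace.comap (z i) inferInstance,
         ⨆ i, ⨆ j, MeasurableSpace.comap (γ i j) inferInstance,
         ⨆ i, ⨆ j, MeasurableSpace.comap (ε i j) inferInstance]) volume)
    -- the error array
    (ξ : Fin n → Fin n → Ω → ℝ)
    (hξ : ∀ i j ω, ξ i j ω =
      a i ω + b j ω + (∑ m, z i ω m * z j ω m) + γ i j ω + ε i j ω) :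
    ∀ i j k l : Fin n, i ≠ j → i ≠ k → i ≠ l → j ≠ k → j ≠ l → k ≠ l →
      (∫ ω, ξ i j ω = 0) ∧
      cov (ξ i j) (ξ i j) = σa ^ 2 + σb ^ 2 + (d : ℝ) * σz ^ 4 + σγ ^ 2 + σε ^ 2 ∧
      cov (ξ i j) (ξ j i) = 2 * ρ * σa * σb + (d : ℝ) * σz ^ 4 + σγ ^ 2 ∧
      cov (ξ i j) (ξ i l) = σa ^ 2 ∧
      cov (ξ i j) (ξ k j) = σb ^ 2 ∧
      cov (ξ i j) (ξ k i) = ρ * σa * σb ∧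
      cov (ξ i j) (ξ k l) = 0 := by
  intro i j k l hij hik hil hjk hjl hkl
  have hcov : ∀ {p q r s : Fin n}, p ≠ q → r ≠ s → cov (ξ p q) (ξ r s) =
      (if p = r then σa ^ 2 else 0) + (if p = s then ρ * σa * σb else 0) +
      (if q = r then ρ * σa * σb else 0) + (if q = s then σb ^ 2 else 0) +
      (if s(p, q) = s(r, s) then (d : ℝ) * σz ^ 4 else 0) +
      (if s(p, q) = s(r, s) then σγ ^ 2 else 0) + (if (p, q) = (r, s) then σε ^ 2 else 0) :=
    fun hpq hrs => by
      rw [cov_eq_covariance,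
        covariance_error_eq_sum ha_L2 hb_L2 hz_L2 hγ_L2 hε_L2 hz_indep hfam hξ hpq hrs,
        covariance_add_add_eq_ite ha_L2 hb_L2 ha_var hb_var hab_cov hab_indep,
        covariance_dotProduct_dotProduct hz_indep hmeas_z hz_L2 hz_mean hz_var hz_comp_indep
          hpq hrs,
        covariance_symmetric_eq_ite hγ_symm hγ_L2 hγ_var hγ_indep hpq hrs,
        covariance_offDiag_eq_ite hε_L2 hε_var hε_indep hpq hrs, Fintype.card_fin]
  rw [hcov hij hij, hcov hij hij.symm, hcov hij hil, hcov hij hjk.symm, hcov hij hik.symm,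
    hcov hij hkl]
  refine ⟨integral_error_eq_zero ha_L2 hb_L2 hz_L2 hγ_L2 hε_L2 hz_indep ha_mean hb_mean hz_mean
    hγ_mean hε_mean hξ hij, ?_⟩
  simp [hij, hik, hil, hjk, hjl, hij.symm]
  ring

/-- Under the bilinear mixed-effects error model
`ξ_{ij} = a_i + b_j + z_i·z_j + γ_{(ij)} + ε_{ij}`, for pairwise distinct `i, j, k, l` the
errors have mean zero and the six covariance values of the exchangeable structure are as
computed by Hoff (2005). -/
theorem bilinear_mixed_effects_covariances {Ω : Type} [MeasureSpace Ω]
    [IsProbabilityMeasure (volume : Measure Ω)]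
    (n d : ℕ) (a b : Fin n → Ω → ℝ) (z : Fin n → Ω → Fin d → ℝ)
    (γ ε : Fin n → Fin n → Ω → ℝ)
    (σa σb σz σγ σε ρ : ℝ)
    -- measurability and integrability
    (hmeas_a : ∀ i, Measurable (a i)) (hmeas_b : ∀ i, Measurable (b i))
    (hmeas_z : ∀ i, Measurable (z i))
    (hmeas_γ : ∀ i j, Measurable (γ i j)) (hmeas_ε : ∀ i j, Measurable (ε i j))
    (ha_L2 : ∀ i, MemLp (a i) 2 volume) (hb_L2 : ∀ i, MemLp (b i) 2 volume)
    (hz_L2 : ∀ i m, MemLp (fun ω => z i ω m) 2 volume)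
    (hγ_L2 : ∀ i j, MemLp (γ i j) 2 volume) (hε_L2 : ∀ i j, MemLp (ε i j) 2 volume)
    -- additive sender/receiver effects
    (ha_mean : ∀ i, ∫ ω, a i ω = 0) (hb_mean : ∀ i, ∫ ω, b i ω = 0)
    (ha_var : ∀ i, cov (a i) (a i) = σa ^ 2) (hb_var : ∀ i, cov (b i) (b i) = σb ^ 2)
    (hab_cov : ∀ i, cov (a i) (b i) = ρ * σa * σb)
    (hab_indep : iIndepFun (fun i ω => (a i ω, b i ω)) volume)
    -- multiplicative latent positions
    (hz_mean : ∀ i m, ∫ ω, z i ω m = 0)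
    (hz_var : ∀ i m, cov (fun ω => z i ω m) (fun ω => z i ω m) = σz ^ 2)
    (hz_comp_indep : ∀ i, iIndepFun (fun m ω => z i ω m) volume)
    (hz_indep : iIndepFun z volume)
    -- symmetric pair effects
    (hγ_symm : ∀ i j, γ i j = γ j i)
    (hγ_mean : ∀ i j, ∫ ω, γ i j ω = 0)
    (hγ_var : ∀ i j, cov (γ i j) (γ i j) = σγ ^ 2)
    (hγ_indep : iIndepFun
      (fun (q : {q : Fin n × Fin n // q.1 < q.2}) ω => γ q.1.1 q.1.2 ω) volume)
    -- idiosyncratic noise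
    (hε_mean : ∀ i j, ∫ ω, ε i j ω = 0)
    (hε_var : ∀ i j, cov (ε i j) (ε i j) = σε ^ 2)
    (hε_indep : iIndepFun
      (fun (q : {q : Fin n × Fin n // q.1 ≠ q.2}) ω => ε q.1.1 q.1.2 ω) volume)
    -- the four families are mutually independent
    (hfam : iIndep
      (![⨆ i, MeasurableSpace.comap (fun ω => (a i ω, b i ω)) inferInstance,
         ⨆ i, MeasurableSpace.comap (z i) inferInstance,
         ⨆ i, ⨆ j, MeasurableSpace.comap (γ i j) inferInstance,
         ⨆ i, ⨆ j, MeasurableSpace.comap (ε i j) inferInstance]) volume)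
    -- the error array
    (ξ : Fin n → Fin n → Ω → ℝ)
    (hξ : ∀ i j ω, ξ i j ω =
      a i ω + b j ω + (∑ m, z i ω m * z j ω m) + γ i j ω + ε i j ω) :
    ∀ i j k l : Fin n, i ≠ j → i ≠ k → i ≠ l → j ≠ k → j ≠ l → k ≠ l →
      (∫ ω, ξ i j ω = 0) ∧
      cov (ξ i j) (ξ i j) = σa ^ 2 + σb ^ 2 + (d : ℝ) * σz ^ 4 + σγ ^ 2 + σε ^ 2 ∧
      cov (ξ i j) (ξ j i) = 2 * ρ * σa * σb + (d : ℝ) * σz ^ 4 + σγ ^ 2 ∧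
      cov (ξ i j) (ξ i l) = σa ^ 2 ∧
      cov (ξ i j) (ξ k j) = σb ^ 2 ∧
      cov (ξ i j) (ξ k i) = ρ * σa * σb ∧
      cov (ξ i j) (ξ k l) = 0 :=
  bilinear_mixed_effects_covariances_general n d a b z γ ε σa σb σz σγ σε ρ hmeas_z ha_L2 hb_L2
    hz_L2 hγ_L2 hε_L2 ha_mean hb_mean ha_var hb_var hab_cov hab_indep hz_mean hz_var hz_comp_indep
    hz_indep hγ_symm hγ_mean hγ_var hγ_indep hε_mean hε_var hε_indep hfam ξ hξ
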